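/- For every prime p ≥ 31 there exists t ∈ ℤ/pℤ such that t ∉ {−1, 0, 1, 2, 9}, 2t ≠ 1, and (t(t−1)/p) = ((t−1)(t−9)/p) = −1. -/

import Mathlib

/-!
For distinct `a, b, c` in a finite field `F` of odd order `q`, write `A = χ((t-a)(t-b))` and
`B = χ((t-b)(t-c))`. Off `{a, b, c}` we have `A, B = ±1` and `A B = χ((t-a)(t-c))`, so
`(1 - A)(1 - B) = 1 - A - B + χ((t-a)(t-c))` is `4` when `A = B = -1` and `0` otherwise.
Summing over `t`, each of the three quadratic character sums is `-1` (a Jacobi sum), so the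
number `N` of `t` with `A = B = -1` satisfies `4 N = q - 2 ± 1 ± 1 ± 1 ≥ q - 5`.
For `(a, b, c) = (0, 1, 9)` and `q = p ≥ 31` this leaves room to avoid `-1`, `2` and `1/2`.
-/

/-- The Legendre symbol `(a / p)` of an element `a : ZMod p`. -/
def legSym (p : ℕ) [Fact p.Prime] (a : ZMod p) : ℤ := legendreSym p a.val

open Finset

section QuadraticChar

variable {F : Type*} [Field F] [Fintype F] [DecidableEq F]

local notation "χ" => quadraticChar F

theorem quadraticChar_sum_mul_sub_sub (hF : ringChar F ≠ 2) {b c : F}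
    (hbc : b ≠ c) : ∑ t, χ ((t - b) * (t - c)) = -1 := by
  have hcb : c - b ≠ 0 := sub_ne_zero.mpr hbc.symm
  have jacobi : ∑ x, χ x * χ (1 - x) = -χ (-1) := by
    simpa [jacobiSum, (quadraticChar_isQuadratic F).inv] using
      jacobiSum_nontrivial_inv (quadraticChar_ne_one hF)
  -- substitute `t = b + (c - b) x`, which turns `(t - b)(t - c)` into `-(c - b)² x (1 - x)`
  rw [← Equiv.sum_comp (Equiv.addLeft b), ← Equiv.sum_comp (Equiv.mulLeft₀ (c - b) hcb)]
  calc ∑ x, χ ((b + (c - b) * x - b) * (b + (c - b) * x - c))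
      = ∑ x, χ (-1) * (χ x * χ (1 - x)) := by
        refine sum_congr rfl fun x _ => ?_
        rw [show (b + (c - b) * x - b) * (b + (c - b) * x - c) = -1 * (x * (1 - x)) * (c - b) ^ 2
          by ring, map_mul, quadraticChar_sq_one' hcb, mul_one, map_mul, map_mul]
    _ = -1 := by
        rw [← mul_sum, jacobi, mul_neg, ← map_mul, neg_one_mul, neg_neg, map_one]

theorem quadraticChar_mul_eq_of_ne {a b c t : F} (hb : t ≠ b) :
    χ ((t - a) * (t - b)) * χ ((t - b) * (t - c)) = χ ((t - a) * (t - c)) := by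
  rw [← map_mul, show (t - a) * (t - b) * ((t - b) * (t - c)) = (t - a) * (t - c) * (t - b) ^ 2
    by ring, map_mul, quadraticChar_sq_one' (sub_ne_zero.mpr hb), mul_one]

theorem card_filter_quadraticChar_eq_neg_one (hF : ringChar F ≠ 2) {a b c : F} (hab : a ≠ b)
    (hbc : b ≠ c) (hac : a ≠ c) :
    4 * (#{t | χ ((t - a) * (t - b)) = -1 ∧ χ ((t - b) * (t - c)) = -1} : ℤ) =
      Fintype.card F - 2 + χ ((a - b) * (a - c)) - χ ((b - a) * (b - c)) +
        χ ((c - a) * (c - b)) := by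
  set P := fun t => χ ((t - a) * (t - b)) = -1 ∧ χ ((t - b) * (t - c)) = -1
  set g := fun t => 1 - χ ((t - a) * (t - b)) - χ ((t - b) * (t - c)) + χ ((t - a) * (t - c)) -
    4 * if P t then 1 else 0
  have hg : ∀ t ∉ ({a, b, c} : Finset F), g t = 0 := by
    intro t ht
    simp only [mem_insert, mem_singleton, not_or] at ht
    obtain ⟨ha, hb, hc⟩ := ht
    simp only [g]
    rw [← quadraticChar_mul_eq_of_ne (a := a) (c := c) hb]
    rcases quadraticChar_dichotomy (mul_ne_zero (sub_ne_zero.mpr ha) (sub_ne_zero.mpr hb))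
      with hA | hA <;>
    rcases quadraticChar_dichotomy (mul_ne_zero (sub_ne_zero.mpr hb) (sub_ne_zero.mpr hc))
      with hB | hB <;>
    simp only [P, hA, hB] <;> norm_num
  have hsum_support : ∑ t, g t = g a + g b + g c := by
    rw [← sum_subset (subset_univ _) fun t _ ht => hg t ht, sum_insert (by simp [hab, hac]),
      sum_pair hbc, add_assoc]
  have hsum : ∑ t, g t = Fintype.card F + 1 - 4 * #(filter P univ) := by
    simp only [g, sum_sub_distrib, sum_add_distrib, ← mul_sum, sum_boole,
      quadraticChar_sum_mul_sub_sub hF hab, quadraticChar_sum_mul_sub_sub hF hbc,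
      quadraticChar_sum_mul_sub_sub hF hac, sum_const, card_univ, nsmul_eq_mul, mul_one]
    ring
  have hga : g a = 1 - χ ((a - b) * (a - c)) := by simp [g, P]
  have hgb : g b = 1 + χ ((b - a) * (b - c)) := by simp [g, P]
  have hgc : g c = 1 - χ ((c - a) * (c - b)) := by simp [g, P]
  linarith

theorem exists_quadraticChar_eq_neg_one_notMem (hF : ringChar F ≠ 2) {a b c : F} (hab : a ≠ b)
    (hbc : b ≠ c) (hac : a ≠ c) (s : Finset F) (hs : 4 * #s + 5 < Fintype.card F) :
    ∃ t ∉ s, χ ((t - a) * (t - b)) = -1 ∧ χ ((t - b) * (t - c)) = -1 := by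
  have hcount := card_filter_quadraticChar_eq_neg_one hF hab hbc hac
  have hχ {x y : F} (hx : x ≠ 0) (hy : y ≠ 0) := quadraticChar_dichotomy (mul_ne_zero hx hy)
  have hlt : #s < #{t | χ ((t - a) * (t - b)) = -1 ∧ χ ((t - b) * (t - c)) = -1} := by
    rcases hχ (sub_ne_zero.mpr hab) (sub_ne_zero.mpr hac) with h₁ | h₁ <;>
    rcases hχ (sub_ne_zero.mpr hab.symm) (sub_ne_zero.mpr hbc) with h₂ | h₂ <;>
    rcases hχ (sub_ne_zero.mpr hac.symm) (sub_ne_zero.mpr hbc.symm) with h₃ | h₃ <;>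
    omega
  obtain ⟨t, ht, hts⟩ := exists_mem_notMem_of_card_lt_card hlt
  exact ⟨t, hts, (mem_filter.mp ht).2⟩

end QuadraticChar

theorem ZMod.natCast_ne_zero_of_pos_of_lt {n m : ℕ} (hm : 0 < m) (hmn : m < n) :
    (m : ZMod n) ≠ 0 := by
  rw [Ne, ZMod.natCast_eq_zero_iff]
  exact fun h => (Nat.le_of_dvd hm h).not_gt hmn

theorem legSym_eq_quadraticChar (p : ℕ) [Fact p.Prime] (a : ZMod p) :
    legSym p a = quadraticChar (ZMod p) a := by
  simp [legSym, legendreSym]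

theorem exists_t_for_three_p (p : ℕ) [Fact p.Prime] (hp : 31 ≤ p) :
    ∃ t : ZMod p, t ∉ ({-1, 0, 1, 2, 9} : Set (ZMod p)) ∧ 2 * t ≠ 1 ∧
      legSym p (t * (t - 1)) = -1 ∧ legSym p ((t - 1) * (t - 9)) = -1 := by
  have hF : ringChar (ZMod p) ≠ 2 := by rw [ZMod.ringChar_zmod_n]; omega
  have h9 : (0 : ZMod p) ≠ 9 := by
    exact_mod_cast (ZMod.natCast_ne_zero_of_pos_of_lt (by norm_num) (by omega : 9 < p)).symm
  have h19 : (1 : ZMod p) ≠ 9 := fun h =>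
    ZMod.natCast_ne_zero_of_pos_of_lt (by norm_num) (by omega : 8 < p)
      (by push_cast; linear_combination -h)
  have hcard : 4 * #({-1, 2, 2⁻¹} : Finset (ZMod p)) + 5 < Fintype.card (ZMod p) := by
    have := card_le_three (a := (-1 : ZMod p)) (b := 2) (c := 2⁻¹)
    rw [ZMod.card]; omega
  obtain ⟨t, hts, hA, hB⟩ :=
    exists_quadraticChar_eq_neg_one_notMem hF zero_ne_one h19 h9 {-1, 2, 2⁻¹} hcard
  rw [sub_zero] at hA
  obtain ⟨ht0, ht1⟩ : t ≠ 0 ∧ t - 1 ≠ 0 := mul_ne_zero_iff.mp fun h => by simp [h] at hA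
  obtain ⟨-, ht9⟩ : t - 1 ≠ 0 ∧ t - 9 ≠ 0 := mul_ne_zero_iff.mp fun h => by simp [h] at hB
  simp only [mem_insert, mem_singleton, not_or] at hts
  refine ⟨t, ?_, fun h => hts.2.2 (eq_inv_of_mul_eq_one_right h), ?_, ?_⟩
  · simp only [Set.mem_insert_iff, Set.mem_singleton_iff, not_or]
    exact ⟨hts.1, ht0, sub_ne_zero.mp ht1, hts.2.1, sub_ne_zero.mp ht9⟩
  all_goals rwa [legSym_eq_quadraticChar]
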